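/- arXiv:1509.09180 — 3 statements merged into one kernel-verified Lean document; each statement's English description precedes it below -/
import Mathlib

section
/- n-qubit quantum one-time pad: for every 2^n × 2^n complex matrix ρ (indexed by functions Fin n → Fin 2), (1/4^n)·Σ_{a,b : Fin n → {0,1}} P(a,b) ρ P(a,b)† = (trace ρ / 2^n) · I, where P(a,b) is the n-fold tensor (Kronecker) product whose i-th factor is X^{a(i)} Z^{b(i)}. -/
open Matrix

noncomputable def X : Matrix (Fin 2) (Fin 2) ℂ := !![0, 1; 1, 0]
noncomputable def Z : Matrix (Fin 2) (Fin 2) ℂ := !![1, 0; 0, -1]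

/-- The `n`-qubit Pauli operator `P(a,b) = ⊗_{i<n} X^{a i} Z^{b i}`, given as the
`2^n × 2^n` matrix (indexed by `Fin n → Fin 2`) whose entries are the products of the
entries of the single-qubit factors. -/
noncomputable def PauliXZ (n : ℕ) (a b : Fin n → Fin 2) :
    Matrix (Fin n → Fin 2) (Fin n → Fin 2) ℂ :=
  fun x y => ∏ i : Fin n, (X ^ (a i : ℕ) * Z ^ (b i : ℕ)) (x i) (y i)

/-! The Pauli operator `X^a Z^b` maps `|y⟩` to `(-1)^(b·y) |y + a⟩`, so `P(a,b) ρ P(a,b)†` has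
`(x,y)`-entry `(-1)^(b·(x+a)) (-1)^(b·(y+a)) ρ(x+a, y+a)`. Averaging over `b` is character
orthogonality on `(ℤ/2)^n` and kills every off-diagonal entry; averaging over `a` then spreads
the diagonal of `ρ` uniformly over all basis states. -/

section

variable {n : ℕ}

/-- The phase `(-1)^(b·z)` by which `Z^b` acts on the basis state `|z⟩`. -/
noncomputable def zPhase (b z : Fin n → Fin 2) : ℂ :=
  ∏ i, (-1) ^ ((b i : ℕ) * (z i : ℕ))

lemma star_zPhase (b z : Fin n → Fin 2) : star (zPhase b z) = zPhase b z := by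
  simp [zPhase, star_prod]

lemma X_pow_mul_Z_pow_apply (a b s t : Fin 2) :
    (X ^ (a : ℕ) * Z ^ (b : ℕ)) s t = if t = s + a then (-1) ^ ((b : ℕ) * (t : ℕ)) else 0 := by
  fin_cases a <;> fin_cases b <;> fin_cases s <;> fin_cases t <;>
    simp [X, Z, pow_succ, mul_apply, Fin.sum_univ_two]

lemma PauliXZ_apply (a b x y : Fin n → Fin 2) :
    PauliXZ n a b x y = if y = x + a then zPhase b y else 0 := by
  simp [PauliXZ, X_pow_mul_Z_pow_apply, Fintype.prod_ite_zero, funext_iff, zPhase]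

lemma PauliXZ_conj_apply (a b : Fin n → Fin 2)
    (ρ : Matrix (Fin n → Fin 2) (Fin n → Fin 2) ℂ) (x y : Fin n → Fin 2) :
    (PauliXZ n a b * ρ * (PauliXZ n a b)ᴴ) x y
      = zPhase b (x + a) * zPhase b (y + a) * ρ (x + a) (y + a) := by
  simp only [mul_apply, conjTranspose_apply, PauliXZ_apply, apply_ite star, star_zero, star_zPhase,
    ite_mul, mul_ite, zero_mul, mul_zero, Finset.sum_ite_eq', Finset.mem_univ, if_true]
  ring

lemma sum_zPhase_mul_zPhase (u v : Fin n → Fin 2) :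
    ∑ b : Fin n → Fin 2, zPhase b u * zPhase b v = if u = v then 2 ^ n else 0 := by
  have qubit (p q : Fin 2) :
      ∑ t : Fin 2, (-1 : ℂ) ^ ((t : ℕ) * (p : ℕ)) * (-1) ^ ((t : ℕ) * (q : ℕ))
        = if p = q then 2 else 0 := by
    fin_cases p <;> fin_cases q <;> norm_num [Fin.sum_univ_two]
  simp only [zPhase, ← Finset.prod_mul_distrib]
  rw [← Fintype.prod_sum fun i (t : Fin 2) =>
    (-1 : ℂ) ^ ((t : ℕ) * (u i : ℕ)) * (-1) ^ ((t : ℕ) * (v i : ℕ))]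
  simp only [qubit, Fintype.prod_ite_zero, funext_iff, Finset.prod_const, Finset.card_univ,
    Fintype.card_fin]

lemma sum_diag_add_left {G R : Type*} [AddGroup G] [Fintype G] [AddCommMonoid R]
    (ρ : Matrix G G R) (x : G) : ∑ a, ρ (x + a) (x + a) = ρ.trace :=
  Fintype.sum_equiv (Equiv.addLeft x) _ _ fun _ => rfl

lemma sum_PauliXZ_conj (ρ : Matrix (Fin n → Fin 2) (Fin n → Fin 2) ℂ) :
    ∑ a : Fin n → Fin 2, ∑ b : Fin n → Fin 2, PauliXZ n a b * ρ * (PauliXZ n a b)ᴴ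
      = (2 ^ n * ρ.trace) • (1 : Matrix (Fin n → Fin 2) (Fin n → Fin 2) ℂ) := by
  ext x y
  have phase_average (a : Fin n → Fin 2) :
      ∑ b, zPhase b (x + a) * zPhase b (y + a) * ρ (x + a) (y + a)
        = if x = y then 2 ^ n * ρ (x + a) (x + a) else 0 := by
    rw [← Finset.sum_mul, sum_zPhase_mul_zPhase]
    simp only [add_left_inj]
    split_ifs with h
    · rw [h]
    · rw [zero_mul]
  simp only [Matrix.sum_apply, PauliXZ_conj_apply, phase_average, Matrix.smul_apply, one_apply,
    smul_eq_mul]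
  split_ifs
  · rw [← Finset.mul_sum, sum_diag_add_left, mul_one]
  · rw [Finset.sum_const_zero, mul_zero]

end

/-- `n`-qubit quantum one-time pad: averaging `P(a,b) ρ P(a,b)†` over all
`a, b : Fin n → {0,1}` yields `(tr ρ / 2^n) • I`. -/
theorem n_qubit_one_time_pad (n : ℕ) (ρ : Matrix (Fin n → Fin 2) (Fin n → Fin 2) ℂ) :
    ((1 : ℂ) / 4 ^ n) • ∑ a : Fin n → Fin 2, ∑ b : Fin n → Fin 2,
      PauliXZ n a b * ρ * (PauliXZ n a b)ᴴ
    = (ρ.trace / 2 ^ n) • (1 : Matrix (Fin n → Fin 2) (Fin n → Fin 2) ℂ) := by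
  rw [sum_PauliXZ_conj, smul_smul]
  congr 1
  rw [show (4 : ℂ) ^ n = 2 ^ n * 2 ^ n by rw [← mul_pow]; norm_num]
  field_simp
end

section
/- n-qubit Pauli twirl (Lemma 2.1): let P = ⊗_{i<n} σ_{f(i)} and P' = ⊗_{i<n} σ_{g(i)} be n-qubit Pauli operators, where f, g : Fin n → Fin 4 select factors from (σ_0,σ_1,σ_2,σ_3) = (I,X,Y,Z). Then for every 2^n × 2^n complex matrix ρ, (1/4^n)·Σ_{h : Fin n → Fin 4} Q(h)† P Q(h) ρ Q(h)† P'† Q(h) equals 0 when f ≠ g, and equals P ρ P† when f = g, where Q(h) = ⊗_{i<n} σ_{h(i)}. -/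
open Matrix

noncomputable def Y : Matrix (Fin 2) (Fin 2) ℂ := Complex.I • (X * Z)

/-- The four single-qubit Paulis `(σ_0, σ_1, σ_2, σ_3) = (I, X, Y, Z)`. -/
noncomputable def σ : Fin 4 → Matrix (Fin 2) (Fin 2) ℂ :=
  ![1, X, Y, Z]

/-- The `n`-qubit Pauli `Q(h) = ⊗_{i<n} σ_{h i}`, as a `2^n × 2^n` matrix indexed by
functions `Fin n → Fin 2`, with entries the products of entries of the factors. -/
noncomputable def pauli (n : ℕ) (h : Fin n → Fin 4) :
    Matrix (Fin n → Fin 2) (Fin n → Fin 2) ℂ :=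
  fun x y => ∏ i : Fin n, σ (h i) (x i) (y i)

noncomputable def ε (a b : Fin 4) : ℂ :=
  if a = 0 ∨ b = 0 ∨ a = b then 1 else -1

lemma sigma_conj (a b : Fin 4) : (σ b)ᴴ * σ a * σ b = ε a b • σ a := by
  fin_cases a <;> fin_cases b <;>
    · ext i j
      fin_cases i <;> fin_cases j <;>
        simp [σ, X, Y, Z, ε, Matrix.mul_apply, Fin.sum_univ_two, Matrix.one_apply,
          Complex.ext_iff]

lemma eps_orth (a a' : Fin 4) :
    ∑ b : Fin 4, ε a b * ε a' b = if a = a' then 4 else 0 := by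
  fin_cases a <;> fin_cases a' <;>
    simp [ε, Fin.sum_univ_four] <;> norm_num

/-- entrywise Kronecker product of a family -/
noncomputable def K (n : ℕ) (A : Fin n → Matrix (Fin 2) (Fin 2) ℂ) :
    Matrix (Fin n → Fin 2) (Fin n → Fin 2) ℂ :=
  fun x y => ∏ i : Fin n, A i (x i) (y i)

lemma K_mul (n : ℕ) (A B : Fin n → Matrix (Fin 2) (Fin 2) ℂ) :
    K n A * K n B = K n (fun i => A i * B i) := by
  ext x y
  simp only [K, Matrix.mul_apply]
  rw [Fintype.prod_sum (fun i j => A i (x i) j * B i j (y i))]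
  simp [Finset.prod_mul_distrib]

lemma K_conj (n : ℕ) (A : Fin n → Matrix (Fin 2) (Fin 2) ℂ) :
    (K n A)ᴴ = K n (fun i => (A i)ᴴ) := by
  ext x y
  simp [K, Matrix.conjTranspose_apply, map_prod]

lemma K_smul (n : ℕ) (c : Fin n → ℂ) (A : Fin n → Matrix (Fin 2) (Fin 2) ℂ) :
    K n (fun i => c i • A i) = (∏ i, c i) • K n A := by
  ext x y
  simp [K, Finset.prod_mul_distrib]

lemma pauli_eq_K (n : ℕ) (h : Fin n → Fin 4) : pauli n h = K n (fun i => σ (h i)) := rfl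

/-- `n`-qubit Pauli twirl -/
theorem n_qubit_pauli_twirl (n : ℕ) (f g : Fin n → Fin 4)
    (ρ : Matrix (Fin n → Fin 2) (Fin n → Fin 2) ℂ) :
    ((1 : ℂ) / 4 ^ n) • ∑ h : Fin n → Fin 4,
      (pauli n h)ᴴ * pauli n f * pauli n h * ρ * (pauli n h)ᴴ * (pauli n g)ᴴ * pauli n h
    = if f = g then pauli n f * ρ * (pauli n f)ᴴ else 0 := by
  have key : ∀ h : Fin n → Fin 4,
      (pauli n h)ᴴ * pauli n f * pauli n h * ρ * (pauli n h)ᴴ * (pauli n g)ᴴ * pauli n h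
      = ((∏ i, ε (f i) (h i)) * ∏ i, ε (g i) (h i)) •
          (pauli n f * ρ * (pauli n g)ᴴ) := by
    intro h
    have h1 : (pauli n h)ᴴ * pauli n f * pauli n h
        = (∏ i, ε (f i) (h i)) • pauli n f := by
      rw [pauli_eq_K, pauli_eq_K, K_conj, K_mul, K_mul]
      calc K n (fun i => (σ (h i))ᴴ * σ (f i) * σ (h i))
          = K n (fun i => ε (f i) (h i) • σ (f i)) :=
            congrArg (K n) (funext fun i => sigma_conj (f i) (h i))
        _ = (∏ i, ε (f i) (h i)) • K n (fun i => σ (f i)) := K_smul n _ _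
    have h2 : (pauli n h)ᴴ * (pauli n g)ᴴ * pauli n h
        = (∏ i, ε (g i) (h i)) • (pauli n g)ᴴ := by
      rw [pauli_eq_K, pauli_eq_K, K_conj, K_conj, K_mul, K_mul]
      calc K n (fun i => (σ (h i))ᴴ * (σ (g i))ᴴ * σ (h i))
          = K n (fun i => ε (g i) (h i) • (σ (g i))ᴴ) := by
            refine congrArg (K n) (funext fun i => ?_)
            have := congrArg Matrix.conjTranspose (sigma_conj (g i) (h i))
            simpa [Matrix.conjTranspose_mul, Matrix.conjTranspose_smul, mul_assoc, ε,
              apply_ite Matrix.conjTranspose, apply_ite (starRingEnd ℂ)] using this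
        _ = (∏ i, ε (g i) (h i)) • K n (fun i => (σ (g i))ᴴ) := K_smul n _ _
    calc (pauli n h)ᴴ * pauli n f * pauli n h * ρ * (pauli n h)ᴴ * (pauli n g)ᴴ * pauli n h
        = ((pauli n h)ᴴ * pauli n f * pauli n h) * ρ *
            ((pauli n h)ᴴ * (pauli n g)ᴴ * pauli n h) := by
          simp only [Matrix.mul_assoc]
      _ = ((∏ i, ε (f i) (h i)) * ∏ i, ε (g i) (h i)) •
            (pauli n f * ρ * (pauli n g)ᴴ) := by
          rw [h1, h2, Matrix.smul_mul, Matrix.smul_mul, _root_.Matrix.mul_smul,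
            smul_smul, mul_comm]
  simp only [key, ← Finset.sum_smul]
  have sum_eq : (∑ h : Fin n → Fin 4, (∏ i, ε (f i) (h i)) * ∏ i, ε (g i) (h i))
      = ∏ i : Fin n, (if f i = g i then (4:ℂ) else 0) := by
    have : ∀ h : Fin n → Fin 4,
        (∏ i, ε (f i) (h i)) * ∏ i, ε (g i) (h i)
        = ∏ i, (ε (f i) (h i) * ε (g i) (h i)) := fun h =>
      (Finset.prod_mul_distrib).symm
    simp only [this]
    rw [← Fintype.prod_sum (fun i b => ε (f i) b * ε (g i) b)]
    exact Finset.prod_congr rfl fun i _ => eps_orth (f i) (g i)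
  rw [sum_eq, smul_smul]
  by_cases hfg : f = g
  · subst hfg
    simp only [if_pos rfl, eq_self_iff_true, if_true, Finset.prod_const, Finset.card_univ,
      Fintype.card_fin]
    rw [one_div, inv_mul_cancel₀ (pow_ne_zero n (by norm_num : (4:ℂ) ≠ 0)), one_smul]
  · rw [if_neg hfg]
    obtain ⟨i, hi⟩ := Function.ne_iff.mp hfg
    have hz : (∏ i : Fin n, if f i = g i then (4:ℂ) else 0) = 0 :=
      Finset.prod_eq_zero (Finset.mem_univ i) (if_neg hi)
    rw [hz, mul_zero, zero_smul]
end

section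
/- Correctness of the X-test T-gate gadget (Figure 3): for all bits a,c,d,x ∈ {0,1}, (⟨c| ⊗ P^x) · CNOT' · ((X^a|0⟩) ⊗ (X^d|0⟩)) equals 0 whenever c ≠ a⊕d, and equals θ · X^d|0⟩ for some θ ∈ ℂ with |θ| = 1 whenever c = a⊕d. Thus the measurement outcome on the data wire is deterministically c = a⊕d, and the auxiliary wire is left (up to global phase) in the state X^d|0⟩, independently of the bit x used in the correction P^x. -/
open Matrix
open scoped Kronecker

noncomputable def P : Matrix (Fin 2) (Fin 2) ℂ := !![1, 0; 0, Complex.I]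

/-- The standard basis column vector `|c⟩` of `ℂ²`. -/
noncomputable def ket (c : Fin 2) : Matrix (Fin 2) (Fin 1) ℂ :=
  fun i _ => if i = c then 1 else 0

/-- The dual row vector `⟨c|`. -/
noncomputable def bra (c : Fin 2) : Matrix (Fin 1) (Fin 2) ℂ :=
  fun _ j => if j = c then 1 else 0

/-- The two-qubit unitary `CNOT'` determined by `|j⟩⊗|k⟩ ↦ |j⊕k⟩⊗|k⟩`
(control on the second qubit, target on the first). -/
noncomputable def CNOT' : Matrix (Fin 2 × Fin 2) (Fin 2 × Fin 2) ℂ :=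
  fun r c => if r.1 = c.1 + c.2 ∧ r.2 = c.2 then 1 else 0

/-! Since `X ^ a * |0⟩ = |a⟩`, the circuit acts on `|a⟩ ⊗ |d⟩`; `CNOT'` sends this to
`|a + d⟩ ⊗ |d⟩`, and by the mixed-product property of `⊗ₖ` the result splits as
`⟨c|a + d⟩ ⊗ P^x|d⟩`. The first factor is the Kronecker delta of `c` and `a + d`, and `|d⟩` is
an eigenvector of `P` with eigenvalue `i ^ d`, which supplies the unimodular phase `(i ^ d) ^ x`. -/

lemma X_mul_ket (j : Fin 2) : X * ket j = ket (j + 1) := by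
  ext i k
  fin_cases i <;> fin_cases j <;> simp [X, ket, mul_apply]

lemma X_pow_val_mul_ket_zero (a : Fin 2) : X ^ (a : ℕ) * ket 0 = ket a := by
  fin_cases a <;> simp [X_mul_ket]

lemma P_mul_ket (k : Fin 2) : P * ket k = Complex.I ^ (k : ℕ) • ket k := by
  ext i l
  fin_cases i <;> fin_cases k <;> simp [P, ket, mul_apply]

lemma P_pow_mul_ket (n : ℕ) (k : Fin 2) :
    P ^ n * ket k = (Complex.I ^ (k : ℕ)) ^ n • ket k := by
  induction n with
  | zero => simp
  | succ n ih =>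
    rw [pow_succ, Matrix.mul_assoc, P_mul_ket, Matrix.mul_smul, ih, smul_smul, pow_succ']

lemma bra_mul_ket (c j : Fin 2) : bra c * ket j = if c = j then 1 else 0 := by
  ext i l
  fin_cases c <;> fin_cases j <;> simp [bra, ket, mul_apply, one_apply, Subsingleton.elim i l]

lemma CNOT'_mul_ket_kronecker_ket (j k : Fin 2) :
    CNOT' * (ket j ⊗ₖ ket k) = ket (j + k) ⊗ₖ ket k := by
  ext ⟨r₁, r₂⟩ l
  simp [CNOT', ket, mul_apply, Fintype.sum_prod_type, kroneckerMap_apply, ite_and, and_comm]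

lemma X_test_gadget_output (a c d : Fin 2) (n : ℕ) :
    (bra c ⊗ₖ (P ^ n)) * CNOT' * (ket a ⊗ₖ ket d) =
      (if c = a + d then (Complex.I ^ (d : ℕ)) ^ n else 0) •
        ((1 : Matrix (Fin 1) (Fin 1) ℂ) ⊗ₖ ket d) := by
  rw [Matrix.mul_assoc, CNOT'_mul_ket_kronecker_ket, ← mul_kronecker_mul, bra_mul_ket,
    P_pow_mul_ket, kronecker_smul]
  split_ifs <;> simp

/-- Correctness of the X-test T-gate gadget (Figure 3): the outcome on the data wire
is deterministically `c = a⊕d`, and whenever `c = a⊕d` the auxiliary wire is left, up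
to global phase, in the state `X^d|0⟩`, independently of the correction bit `x`. -/
theorem X_test_T_gadget_correctness (a c d x : Fin 2) :
    (c ≠ a + d →
      (bra c ⊗ₖ (P ^ (x : ℕ))) * CNOT' *
          ((X ^ (a : ℕ) * ket 0) ⊗ₖ (X ^ (d : ℕ) * ket 0)) = 0) ∧
    (c = a + d →
      ∃ θ : ℂ, ‖θ‖ = 1 ∧
        (bra c ⊗ₖ (P ^ (x : ℕ))) * CNOT' *
            ((X ^ (a : ℕ) * ket 0) ⊗ₖ (X ^ (d : ℕ) * ket 0))
          = θ • ((1 : Matrix (Fin 1) (Fin 1) ℂ) ⊗ₖ (X ^ (d : ℕ) * ket 0))) := by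
  simp only [X_pow_val_mul_ket_zero, X_test_gadget_output]
  refine ⟨fun h => by rw [if_neg h, zero_smul], fun h => ⟨_, ?_, by rw [if_pos h]⟩⟩
  simp
end
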